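/- arXiv:0803.3642 — 4 statements merged into one kernel-verified Lean document; each statement's English description precedes it below -/
import Mathlib

section
/- Let (S_k)_{k≥0} be the simple unbiased random walk on ℤ started at 0. Then there exists a natural number t_0 (an absolute constant) such that P[for all integers T > t_0, S_T < T/2] > 1 - 1/e. -/
/-!
Chernoff's bound with `t = log 2`: since `E[2^{ε_i}] = cosh (log 2) = 5/4`, we get
`P[S_T ≥ T/2] ≤ 2^{-T/2} (5/4)^T ≤ (8/9)^T`. A union bound over `T > 30` bounds the
probability that `S_T ≥ T/2` for some `T > 30` by `9 (8/9)^31 < 1/3 < 1/e`.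
-/

open MeasureTheory ProbabilityTheory Real

namespace MeasureTheory

variable {Ω : Type*} [MeasurableSpace Ω] {P : Measure Ω}

lemma measureReal_iUnion_le_of_le_geometric [IsFiniteMeasure P] {C : ℕ → Set Ω} {c r : ℝ}
    (hr₀ : 0 ≤ r) (hr₁ : r < 1) (hC : ∀ n, P.real (C n) ≤ c * r ^ n) :
    P.real (⋃ n, C n) ≤ c * (1 - r)⁻¹ := by
  have hc : 0 ≤ c := by simpa using measureReal_nonneg.trans (hC 0)
  refine ENNReal.toReal_le_of_le_ofReal (by have := sub_pos.mpr hr₁; positivity) ?_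
  calc P (⋃ n, C n) ≤ ∑' n, P (C n) := measure_iUnion_le _
    _ ≤ ∑' n, ENNReal.ofReal (c * r ^ n) := ENNReal.tsum_le_tsum fun n =>
        ENNReal.le_ofReal_iff_toReal_le (measure_ne_top _ _) (by positivity) |>.mpr (hC n)
    _ = ENNReal.ofReal (c * (1 - r)⁻¹) := by
        rw [← ENNReal.ofReal_tsum_of_nonneg (fun n => by positivity)
          ((summable_geometric_of_lt_one hr₀ hr₁).mul_left c), tsum_mul_left,
          tsum_geometric_of_lt_one hr₀ hr₁]

end MeasureTheory

namespace ProbabilityTheory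

variable {Ω : Type*} [MeasurableSpace Ω] {P : Measure Ω} [IsProbabilityMeasure P]

section Sign

variable {X : Ω → ℝ}

lemma ae_eq_one_or_eq_neg_one (hX : Measurable X) (h₁ : P {ω | X ω = 1} = 1 / 2)
    (h₂ : P {ω | X ω = -1} = 1 / 2) : ∀ᵐ ω ∂P, X ω = 1 ∨ X ω = -1 := by
  have hdisj : Disjoint {ω | X ω = 1} {ω | X ω = -1} :=
    Set.disjoint_left.mpr fun ω (h₁ : X ω = 1) (h₂ : X ω = -1) => by linarith
  have hunion : P ({ω | X ω = 1} ∪ {ω | X ω = -1}) = 1 := by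
    rw [measure_union hdisj (measurableSet_eq_fun hX measurable_const), h₁, h₂,
      ENNReal.add_halves]
  rw [ae_iff]
  exact (prob_compl_eq_zero_iff ((measurableSet_eq_fun hX measurable_const).union
    (measurableSet_eq_fun hX measurable_const))).mpr hunion

lemma exp_mul_ae_eq_indicator (hX : Measurable X) (h₁ : P {ω | X ω = 1} = 1 / 2)
    (h₂ : P {ω | X ω = -1} = 1 / 2) (t : ℝ) :
    (fun ω => exp (t * X ω)) =ᵐ[P]
      {ω | X ω = 1}.indicator (fun _ => exp t) +
        {ω | X ω = -1}.indicator (fun _ => exp (-t)) := by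
  filter_upwards [ae_eq_one_or_eq_neg_one hX h₁ h₂] with ω hω
  rcases hω with hω | hω <;> norm_num [Set.indicator, hω]

lemma integrable_exp_mul_of_sign (hX : Measurable X) (h₁ : P {ω | X ω = 1} = 1 / 2)
    (h₂ : P {ω | X ω = -1} = 1 / 2) (t : ℝ) : Integrable (fun ω => exp (t * X ω)) P :=
  (((integrable_const _).indicator (measurableSet_eq_fun hX measurable_const)).add
    ((integrable_const _).indicator (measurableSet_eq_fun hX measurable_const))).congr
    (exp_mul_ae_eq_indicator hX h₁ h₂ t).symm

lemma mgf_eq_cosh_of_sign (hX : Measurable X) (h₁ : P {ω | X ω = 1} = 1 / 2)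
    (h₂ : P {ω | X ω = -1} = 1 / 2) (t : ℝ) : mgf X P t = cosh t := by
  rw [mgf, integral_congr_ae (exp_mul_ae_eq_indicator hX h₁ h₂ t), integral_add'
    ((integrable_const _).indicator (measurableSet_eq_fun hX measurable_const))
    ((integrable_const _).indicator (measurableSet_eq_fun hX measurable_const)),
    integral_indicator_const _ (measurableSet_eq_fun hX measurable_const),
    integral_indicator_const _ (measurableSet_eq_fun hX measurable_const), measureReal_def,
    measureReal_def, h₁, h₂, cosh_eq]
  simp only [ENNReal.toReal_div, ENNReal.toReal_one, ENNReal.toReal_ofNat, smul_eq_mul]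
  ring

lemma measureReal_sum_ge_le_exp_mul_cosh_pow {ι : Type*} {ε : ι → Ω → ℝ}
    (hmeas : ∀ i, Measurable (ε i)) (hindep : iIndepFun ε P)
    (h₁ : ∀ i, P {ω | ε i ω = 1} = 1 / 2) (h₂ : ∀ i, P {ω | ε i ω = -1} = 1 / 2)
    (s : Finset ι) (a : ℝ) {t : ℝ} (ht : 0 ≤ t) :
    P.real {ω | a ≤ ∑ i ∈ s, ε i ω} ≤ exp (-t * a) * cosh t ^ s.card := by
  have hchernoff := measure_ge_le_exp_mul_mgf (X := ∑ i ∈ s, ε i) a ht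
    (hindep.integrable_exp_mul_sum hmeas fun i _ =>
      integrable_exp_mul_of_sign (hmeas i) (h₁ i) (h₂ i) t)
  rw [hindep.mgf_sum hmeas, Finset.prod_congr rfl fun i _ => mgf_eq_cosh_of_sign (hmeas i) (h₁ i)
    (h₂ i) t, Finset.prod_const] at hchernoff
  simpa only [Finset.sum_apply] using hchernoff

lemma measureReal_sum_ge_half_card_le {ι : Type*} {ε : ι → Ω → ℝ}
    (hmeas : ∀ i, Measurable (ε i)) (hindep : iIndepFun ε P)
    (h₁ : ∀ i, P {ω | ε i ω = 1} = 1 / 2) (h₂ : ∀ i, P {ω | ε i ω = -1} = 1 / 2)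
    (s : Finset ι) :
    P.real {ω | (s.card : ℝ) / 2 ≤ ∑ i ∈ s, ε i ω} ≤ (8 / 9) ^ s.card := by
  refine (measureReal_sum_ge_le_exp_mul_cosh_pow hmeas hindep h₁ h₂ s _
    (log_nonneg one_le_two)).trans ?_
  have hbase : exp (-log 2 / 2) * cosh (log 2) ≤ 8 / 9 := by
    refine le_of_pow_le_pow_left₀ two_ne_zero (by norm_num) ?_
    rw [mul_pow, ← exp_nat_mul, cosh_log two_pos, Nat.cast_ofNat, mul_div_cancel₀ _ two_ne_zero,
      exp_neg, exp_log two_pos]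
    norm_num
  calc exp (-log 2 * ((s.card : ℝ) / 2)) * cosh (log 2) ^ s.card
      = (exp (-log 2 / 2) * cosh (log 2)) ^ s.card := by
        rw [mul_pow, ← exp_nat_mul]; ring_nf
    _ ≤ (8 / 9) ^ s.card := pow_le_pow_left₀ (by positivity) hbase _

end Sign

end ProbabilityTheory

/-- For the simple unbiased random walk `S_k = ε_1 + ⋯ + ε_k` built from
i.i.d. signs `ε_i` with `P[ε_i = 1] = P[ε_i = -1] = 1/2`, there is an absolute constant
`t₀ ∈ ℕ` such that `P[∀ T > t₀, S_T < T/2] > 1 - 1/e`. -/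
theorem random_walk_eventually_below_half
    {Ω : Type*} [MeasurableSpace Ω] (P : Measure Ω) [IsProbabilityMeasure P]
    (ε : ℕ → Ω → ℝ)
    (hmeas : ∀ i, Measurable (ε i))
    (hindep : iIndepFun ε P)
    (hplus : ∀ i, P {ω | ε i ω = 1} = 1 / 2)
    (hminus : ∀ i, P {ω | ε i ω = -1} = 1 / 2) :
    ∃ t₀ : ℕ,
      P {ω | ∀ T : ℕ, t₀ < T → (∑ i ∈ Finset.range T, ε i ω) < (T : ℝ) / 2} >
        ENNReal.ofReal (1 - Real.exp (-1)) := by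
  refine ⟨30, ?_⟩
  set bad : ℕ → Set Ω := fun n =>
    {ω | ((n + 31 : ℕ) : ℝ) / 2 ≤ ∑ i ∈ Finset.range (n + 31), ε i ω}
  have hbad_meas : MeasurableSet (⋃ n, bad n) := .iUnion fun n =>
    measurableSet_le measurable_const (Finset.measurable_sum _ fun i _ => hmeas i)
  have hgood : {ω | ∀ T : ℕ, 30 < T → (∑ i ∈ Finset.range T, ε i ω) < (T : ℝ) / 2} =
      (⋃ n, bad n)ᶜ := by
    ext ω
    simp only [bad, Set.mem_compl_iff, Set.mem_iUnion, not_exists, not_le, Set.mem_ofPred_eq]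
    refine ⟨fun h n => h _ (by omega), fun h T hT => ?_⟩
    simpa [Nat.sub_add_cancel (show 31 ≤ T by omega)] using h (T - 31)
  have hbad : P.real (⋃ n, bad n) ≤ (8 / 9) ^ 31 * (1 - 8 / 9)⁻¹ :=
    measureReal_iUnion_le_of_le_geometric (by norm_num) (by norm_num) fun n => by
      simpa [bad, pow_add, mul_comm] using
        measureReal_sum_ge_half_card_le hmeas hindep hplus hminus (Finset.range (n + 31))
  have hexp : 1 / 3 < exp (-1) := by
    rw [exp_neg, one_div]; exact inv_strictAnti₀ (exp_pos 1) exp_one_lt_three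
  have hexp_lt_one : exp (-1) < 1 := exp_lt_one_iff.mpr (by norm_num)
  rw [hgood, gt_iff_lt, ENNReal.ofReal_lt_iff_lt_toReal (by linarith) (measure_ne_top _ _),
    ← measureReal_def, probReal_compl_eq_one_sub hbad_meas]
  norm_num at hbad
  linarith
end

section
/- There exists a natural number t_0 (an absolute constant) with the following property: for every real number n ≥ 2 and every sequence (X_i)_{i≥1} of i.i.d. real-valued random variables satisfying X_i ≤ log n almost surely and P[X_i ≥ -(3/2)·log n] ≤ 1/2, one has P[there exists an integer k > t_0 with X_1 + ... + X_k > -2] ≤ 1/e. In particular, t_0 does not depend on n or on the common distribution of the X_i. -/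
/-!
With `L = log n` and `t = 2 log q / L` (here `q = 11/10`), the bound `X ≤ L` gives
`exp (t X) ≤ q²`, while off the event `{X ≥ -(3/2) L}`, of probability at least `1/2`, it gives
`exp (t X) ≤ q⁻³`. Hence `E[exp (t X)] ≤ ρ := (q² + q⁻³)/2 < 1`, uniformly in `n`, and Chernoff's
bound gives `P[S_k > -2] ≤ exp (2t) ρ^k ≤ q⁶ ρ^k` since `L ≥ log 2 > 2/3`. Summing this geometric
tail over `k > t₀` gives at most `1/e` once `t₀ ≥ 299`.
-/

open MeasureTheory ProbabilityTheory Real Finset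

section

variable {Ω : Type*} [MeasurableSpace Ω] {μ : Measure Ω}

lemma mgf_le_of_ae_le_of_measureReal_le [IsProbabilityMeasure μ] {X : Ω → ℝ} {a b p t : ℝ}
    (hX : Measurable X) (hXa : ∀ᵐ ω ∂μ, X ω ≤ a) (hp : μ.real {ω | b ≤ X ω} ≤ p)
    (hba : b ≤ a) (ht : 0 ≤ t) :
    mgf X μ t ≤ p * exp (t * a) + (1 - p) * exp (t * b) := by
  set B := {ω | b ≤ X ω}
  have hB : MeasurableSet B := measurableSet_le measurable_const hX
  have hint := integrable_exp_mul_of_le t a ht hX.aemeasurable hXa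
  have h_on : ∫ ω in B, exp (t * X ω) ∂μ ≤ μ.real B * exp (t * a) := by
    calc ∫ ω in B, exp (t * X ω) ∂μ ≤ ∫ _ in B, exp (t * a) ∂μ := by
          refine setIntegral_mono_ae hint.integrableOn (integrable_const _) ?_
          filter_upwards [hXa] with ω hω
          gcongr
      _ = μ.real B * exp (t * a) := by simp
  have h_off : ∫ ω in Bᶜ, exp (t * X ω) ∂μ ≤ μ.real Bᶜ * exp (t * b) := by
    calc ∫ ω in Bᶜ, exp (t * X ω) ∂μ ≤ ∫ _ in Bᶜ, exp (t * b) ∂μ := by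
          refine setIntegral_mono_on hint.integrableOn (integrable_const _) hB.compl ?_
          intro ω hω
          have : X ω < b := not_le.mp hω
          gcongr
      _ = μ.real Bᶜ * exp (t * b) := by simp
  have hexp : exp (t * b) ≤ exp (t * a) := by gcongr
  have hmono := mul_le_mul_of_nonneg_right hp (sub_nonneg.mpr hexp)
  calc mgf X μ t = ∫ ω in B, exp (t * X ω) ∂μ + ∫ ω in Bᶜ, exp (t * X ω) ∂μ :=
        (integral_add_compl hB hint).symm
    _ ≤ μ.real B * exp (t * a) + (1 - μ.real B) * exp (t * b) := by
        rw [← probReal_compl_eq_one_sub hB]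
        exact add_le_add h_on h_off
    _ ≤ p * exp (t * a) + (1 - p) * exp (t * b) := by linarith

lemma ProbabilityTheory.iIndepFun.measureReal_le_sum_le_exp_mul_pow {ι : Type*} {X : ι → Ω → ℝ}
    (hindep : iIndepFun X μ) (hmeas : ∀ i, Measurable (X i)) {t ρ : ℝ} (ht : 0 ≤ t)
    (hint : ∀ i, Integrable (fun ω ↦ exp (t * X i ω)) μ) (hmgf : ∀ i, mgf (X i) μ t ≤ ρ)
    (c : ℝ) (s : Finset ι) :
    μ.real {ω | c ≤ ∑ i ∈ s, X i ω} ≤ exp (-t * c) * ρ ^ s.card := by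
  have := hindep.isProbabilityMeasure
  have hmgf_sum : mgf (∑ i ∈ s, X i) μ t ≤ ρ ^ s.card := by
    rw [hindep.mgf_sum hmeas s, ← prod_const]
    exact prod_le_prod (fun _ _ ↦ mgf_nonneg) (fun i _ ↦ hmgf i)
  have hchernoff := measure_ge_le_exp_mul_mgf c ht
    (hindep.integrable_exp_mul_sum hmeas (s := s) fun i _ ↦ hint i)
  simp only [Finset.sum_apply] at hchernoff
  exact hchernoff.trans (by gcongr)

lemma measure_exists_gt_le_of_le_geometric {E : ℕ → Set Ω} {C ρ : ℝ} (hC : 0 ≤ C)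
    (hρ₀ : 0 ≤ ρ) (hρ₁ : ρ < 1) (hE : ∀ k, μ (E k) ≤ ENNReal.ofReal (C * ρ ^ k)) (m : ℕ) :
    μ {ω | ∃ k, m < k ∧ ω ∈ E k} ≤ ENNReal.ofReal (C * ρ ^ (m + 1) / (1 - ρ)) := by
  have hsub : {ω | ∃ k, m < k ∧ ω ∈ E k} ⊆ ⋃ j, E (j + (m + 1)) := by
    rintro ω ⟨k, hk, hω⟩
    exact Set.mem_iUnion.mpr ⟨k - (m + 1), by rwa [Nat.sub_add_cancel hk]⟩
  have hsummable : Summable fun j : ℕ ↦ C * ρ ^ (j + (m + 1)) := by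
    simp_rw [pow_add]
    exact ((summable_geometric_of_lt_one hρ₀ hρ₁).mul_right _).mul_left C
  calc μ {ω | ∃ k, m < k ∧ ω ∈ E k} ≤ ∑' j, μ (E (j + (m + 1))) :=
        (measure_mono hsub).trans (measure_iUnion_le _)
    _ ≤ ∑' j : ℕ, ENNReal.ofReal (C * ρ ^ (j + (m + 1))) := ENNReal.tsum_le_tsum fun j ↦ hE _
    _ = ENNReal.ofReal (∑' j : ℕ, C * ρ ^ (j + (m + 1))) :=
        (ENNReal.ofReal_tsum_of_nonneg (fun j ↦ by positivity) hsummable).symm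
    _ = ENNReal.ofReal (C * ρ ^ (m + 1) / (1 - ρ)) := by
        simp_rw [pow_add, tsum_mul_left, tsum_mul_right, tsum_geometric_of_lt_one hρ₀ hρ₁]
        ring_nf

lemma mgf_le_of_ae_le_of_measure_tail_le [IsProbabilityMeasure μ] {X : Ω → ℝ} {L q : ℝ}
    (hX : Measurable X) (hL : 0 < L) (hq : 1 ≤ q) (hXL : ∀ᵐ ω ∂μ, X ω ≤ L)
    (htail : μ {ω | -(3 / 2) * L ≤ X ω} ≤ 1 / 2) :
    mgf X μ (2 * log q / L) ≤ (q ^ 2 + (q ^ 3)⁻¹) / 2 := by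
  have hp : μ.real {ω | -(3 / 2) * L ≤ X ω} ≤ 1 / 2 := by
    simpa [measureReal_def] using ENNReal.toReal_mono (by norm_num) htail
  have ht : 0 ≤ 2 * log q / L := by
    have := log_nonneg hq
    positivity
  have hq₀ : 0 < q := by linarith
  have h_top : exp (2 * log q / L * L) = q ^ 2 := by
    rw [div_mul_cancel₀ _ hL.ne', ← exp_log (pow_pos hq₀ 2), log_pow]
    norm_num
  have h_bot : exp (2 * log q / L * (-(3 / 2) * L)) = (q ^ 3)⁻¹ := by
    rw [show 2 * log q / L * (-(3 / 2) * L) = -(3 * log q) by field_simp, exp_neg,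
      ← exp_log (pow_pos hq₀ 3), log_pow]
    norm_num
  refine (mgf_le_of_ae_le_of_measureReal_le hX hXL hp (by linarith) ht).trans_eq ?_
  rw [h_top, h_bot]
  ring

lemma measure_neg_two_lt_sum_le {X : ℕ → Ω → ℝ} {L q : ℝ} (hmeas : ∀ i, Measurable (X i))
    (hindep : iIndepFun X μ) (hL : 2 / 3 ≤ L) (hq : 1 ≤ q) (hXL : ∀ i, ∀ᵐ ω ∂μ, X i ω ≤ L)
    (htail : ∀ i, μ {ω | -(3 / 2) * L ≤ X i ω} ≤ 1 / 2) (k : ℕ) :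
    μ {ω | -2 < ∑ i ∈ range k, X i ω} ≤
      ENNReal.ofReal (q ^ 6 * ((q ^ 2 + (q ^ 3)⁻¹) / 2) ^ k) := by
  have := hindep.isProbabilityMeasure
  have hL₀ : 0 < L := by linarith
  have hlog := log_nonneg hq
  set t := 2 * log q / L
  have ht : 0 ≤ t := by positivity
  have hchernoff := hindep.measureReal_le_sum_le_exp_mul_pow hmeas ht
    (fun i ↦ integrable_exp_mul_of_le t L ht (hmeas i).aemeasurable (hXL i))
    (fun i ↦ mgf_le_of_ae_le_of_measure_tail_le (hmeas i) hL₀ hq (hXL i) (htail i)) (-2) (range k)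
  have hexp : exp (-t * -2) ≤ q ^ 6 := by
    have h : -t * -2 ≤ 6 * log q := by
      rw [show -t * -2 = 4 * log q / L by ring, div_le_iff₀ hL₀]
      nlinarith
    calc exp (-t * -2) ≤ exp (6 * log q) := exp_le_exp.mpr h
      _ = q ^ 6 := by
        rw [show 6 * log q = log (q ^ 6) by rw [log_pow]; norm_num, exp_log (by positivity)]
  calc μ {ω | -2 < ∑ i ∈ range k, X i ω} ≤ μ {ω | -2 ≤ ∑ i ∈ range k, X i ω} :=
        measure_mono (Set.ofPred_subset_ofPred.mpr fun _ ↦ le_of_lt)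
    _ = ENNReal.ofReal (μ.real {ω | -2 ≤ ∑ i ∈ range k, X i ω}) := (ofReal_measureReal).symm
    _ ≤ ENNReal.ofReal (q ^ 6 * ((q ^ 2 + (q ^ 3)⁻¹) / 2) ^ k) := by
        refine ENNReal.ofReal_le_ofReal (hchernoff.trans ?_)
        rw [card_range]
        gcongr

end

/-- There is an absolute constant `t₀ ∈ ℕ` such that: for every real
`n ≥ 2` and every i.i.d. sequence `(X_i)` with `X_i ≤ log n` almost surely and
`P[X_i ≥ -(3/2) log n] ≤ 1/2`, we have
`P[∃ k > t₀, X_1 + ⋯ + X_k > -2] ≤ 1/e`. -/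
theorem random_walk_stays_negative_uniform :
    ∃ t₀ : ℕ, ∀ (n : ℝ), 2 ≤ n →
      ∀ (Ω : Type) [MeasurableSpace Ω] (P : Measure Ω) [IsProbabilityMeasure P]
        (X : ℕ → Ω → ℝ),
        (∀ i, Measurable (X i)) →
        iIndepFun X P →
        (∀ i, IdentDistrib (X i) (X 0) P P) →
        (∀ i, ∀ᵐ ω ∂P, X i ω ≤ Real.log n) →
        (∀ i, P {ω | -(3 / 2) * Real.log n ≤ X i ω} ≤ 1 / 2) →
        P {ω | ∃ k : ℕ, t₀ < k ∧ -2 < ∑ i ∈ Finset.range k, X i ω} ≤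
          ENNReal.ofReal (Real.exp (-1)) := by
  refine ⟨299, fun n hn Ω _ P _ X hmeas hindep _ hle htail ↦ ?_⟩
  have hlog : 2 / 3 ≤ log n := by
    have := log_le_log (by norm_num) hn
    linarith [log_two_gt_d9]
  have hwalk :=
    measure_neg_two_lt_sum_le (q := 11 / 10) hmeas hindep hlog (by norm_num) hle htail
  refine (measure_exists_gt_le_of_le_geometric (by norm_num) (by norm_num) (by norm_num)
    hwalk 299).trans (ENNReal.ofReal_le_ofReal ?_)
  have : (11 / 10 : ℝ) ^ 6 * (((11 / 10) ^ 2 + ((11 / 10) ^ 3)⁻¹) / 2) ^ (299 + 1) /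
      (1 - ((11 / 10) ^ 2 + ((11 / 10) ^ 3)⁻¹) / 2) < 0.36 := by
    -- `norm_num` leaves powers with exponent above 256 unevaluated
    rw [show 299 + 1 = 2 * 150 by norm_num, pow_mul]
    norm_num
  exact (this.trans ((by norm_num : (0.36 : ℝ) < 0.36787944116).trans exp_neg_one_gt_d9)).le
end

section
/- Let n = n₁ + n₂ with 1 ≤ n₁ ≤ n₂, and let x^(0) ∈ ℝ^n be the vector equal to 1 on coordinates 1, ..., n₁ and equal to -n₁/n₂ on coordinates n₁+1, ..., n. Let x^(K) be obtained from x^(0) by any finite sequence of pairwise convex updates, and suppose exactly ν of these updates involve one index in {1,...,n₁} and one index in {n₁+1,...,n}. Then the mean of x^(K) over the first n₁ coordinates, y = (Σ_{i=1}^{n₁} x^(K)_i)/n₁, satisfies y ≥ 1 - 2ν/n₁. -/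
open scoped BigOperators

/-! A convex update preserves every convex set of values, so all coordinates stay in `[-1, 1]`.
It also preserves `x i + x j`, so the sum over the first group changes only under cross updates,
and then by `(1 - α) (x j - x i) ≥ -2`. The sum starts at `n₁` and so ends at least at `n₁ - 2ν`. -/

/-- A pairwise convex update on a vector `x` with indices `i ≠ j` and coefficient `α`:
`x i` is replaced by `α·x i + (1-α)·x j`, `x j` by `α·x j + (1-α)·x i`, and all other
coordinates are unchanged. -/
def convexUpdate (x : ℕ → ℝ) (i j : ℕ) (α : ℝ) : ℕ → ℝ :=
  fun l =>
    if l = i then α * x i + (1 - α) * x j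
    else if l = j then α * x j + (1 - α) * x i
    else x l

open Finset

section ConvexUpdate

variable {x : ℕ → ℝ} {i j : ℕ} {α : ℝ}

lemma convexUpdate_mem {s : Set ℝ} (hs : Convex ℝ s) (hα : α ∈ Set.Icc (0 : ℝ) 1)
    (hi : x i ∈ s) (hj : x j ∈ s) {l : ℕ} (hl : x l ∈ s) : convexUpdate x i j α l ∈ s := by
  unfold convexUpdate
  split_ifs
  · exact hs hi hj hα.1 (sub_nonneg.2 hα.2) (add_sub_cancel _ _)
  · exact hs hj hi hα.1 (sub_nonneg.2 hα.2) (add_sub_cancel _ _)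
  · exact hl

lemma convexUpdate_eq_add_single (hij : i ≠ j) (α : ℝ) :
    convexUpdate x i j α =
      x + Pi.single i ((1 - α) * (x j - x i)) + Pi.single j ((1 - α) * (x i - x j)) := by
  funext l
  simp only [convexUpdate, Pi.add_apply, Pi.single_apply]
  split_ifs with hli hlj hlj <;> subst_vars
  · exact absurd rfl hij
  all_goals ring

lemma sum_convexUpdate (s : Finset ℕ) (hij : i ≠ j) (α : ℝ) :
    ∑ l ∈ s, convexUpdate x i j α l = ∑ l ∈ s, x l +
      (if i ∈ s then (1 - α) * (x j - x i) else 0) +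
      (if j ∈ s then (1 - α) * (x i - x j) else 0) := by
  simp only [convexUpdate_eq_add_single hij, Pi.add_apply, sum_add_distrib, sum_pi_single']

lemma sum_sub_le_sum_convexUpdate (s : Finset ℕ) (hij : i ≠ j) (hα : α ∈ Set.Icc (0 : ℝ) 1)
    {a b : ℝ} (hi : x i ∈ Set.Icc a b) (hj : x j ∈ Set.Icc a b) :
    ∑ l ∈ s, x l - (b - a) * (if (i ∈ s ∧ j ∉ s) ∨ (i ∉ s ∧ j ∈ s) then 1 else 0) ≤
      ∑ l ∈ s, convexUpdate x i j α l := by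
  obtain ⟨hα0, hα1⟩ := hα
  obtain ⟨hi0, hi1⟩ := hi
  obtain ⟨hj0, hj1⟩ := hj
  rw [sum_convexUpdate s hij]
  by_cases his : i ∈ s <;> by_cases hjs : j ∈ s <;>
    simp only [his, hjs, not_true_eq_false, not_false_eq_true, and_true, and_false, or_false,
      false_or, if_true, if_false] <;> nlinarith

end ConvexUpdate

def IsConvexUpdateSeq (N K : ℕ) (x : ℕ → ℕ → ℝ) (i j : ℕ → ℕ) (α : ℕ → ℝ) : Prop :=
  ∀ k < K, i k < N ∧ j k < N ∧ i k ≠ j k ∧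
    α k ∈ Set.Icc (0 : ℝ) 1 ∧ x (k + 1) = convexUpdate (x k) (i k) (j k) (α k)

namespace IsConvexUpdateSeq

variable {N K : ℕ} {x : ℕ → ℕ → ℝ} {i j : ℕ → ℕ} {α : ℕ → ℝ}

lemma mem {s : Set ℝ} (h : IsConvexUpdateSeq N K x i j α) (hs : Convex ℝ s)
    (h0 : ∀ l < N, x 0 l ∈ s) : ∀ k ≤ K, ∀ l < N, x k l ∈ s := by
  intro k
  induction k with
  | zero => exact fun _ => h0
  | succ k ih =>
    intro hk l hl
    obtain ⟨hi, hj, -, hα, hx⟩ := h k hk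
    have hxk := ih (Nat.le_of_succ_le hk)
    rw [hx]
    exact convexUpdate_mem hs hα (hxk _ hi) (hxk _ hj) (hxk l hl)

lemma sum_sub_card_le (h : IsConvexUpdateSeq N K x i j α) {a b : ℝ}
    (h0 : ∀ l < N, x 0 l ∈ Set.Icc a b) (s : Finset ℕ) :
    ∑ l ∈ s, x 0 l - (b - a) * #{k ∈ range K | (i k ∈ s ∧ j k ∉ s) ∨ (i k ∉ s ∧ j k ∈ s)} ≤
      ∑ l ∈ s, x K l := by
  have hmem := h.mem (convex_Icc a b) h0
  calc _ = ∑ l ∈ s, x 0 l + ∑ k ∈ range K,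
        -((b - a) * if (i k ∈ s ∧ j k ∉ s) ∨ (i k ∉ s ∧ j k ∈ s) then 1 else 0) := by
        rw [natCast_card_filter, mul_sum, sum_neg_distrib, sub_eq_add_neg]
    _ ≤ ∑ l ∈ s, x 0 l + ∑ k ∈ range K, (∑ l ∈ s, x (k + 1) l - ∑ l ∈ s, x k l) := by
        gcongr with k hk
        have hk := mem_range.1 hk
        obtain ⟨hi, hj, hij, hα, hx⟩ := h k hk
        rw [hx]
        linarith [sum_sub_le_sum_convexUpdate s hij hα (hmem k hk.le _ hi) (hmem k hk.le _ hj)]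
    _ = ∑ l ∈ s, x K l := by
        rw [sum_range_sub (fun k => ∑ l ∈ s, x k l)]
        ring

end IsConvexUpdateSeq

/-- Start from the vector that is `1` on the first `n₁` coordinates and
`-n₁/n₂` on the remaining `n₂` coordinates (`1 ≤ n₁ ≤ n₂`). After any finite sequence of
pairwise convex updates, of which exactly `ν` are cross updates (one index in each group),
the mean `y` of the first `n₁` coordinates satisfies `y ≥ 1 - 2ν/n₁`. -/
theorem group_mean_lower_bound_convex_updates
    (n₁ n₂ K : ℕ) (h1 : 1 ≤ n₁) (h12 : n₁ ≤ n₂)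
    (x : ℕ → ℕ → ℝ) (i j : ℕ → ℕ) (α : ℕ → ℝ)
    (hx0 : ∀ l < n₁ + n₂, x 0 l = if l < n₁ then (1 : ℝ) else -((n₁ : ℝ) / n₂))
    (hstep : ∀ k < K, i k < n₁ + n₂ ∧ j k < n₁ + n₂ ∧ i k ≠ j k ∧
      α k ∈ Set.Icc (0 : ℝ) 1 ∧ x (k + 1) = convexUpdate (x k) (i k) (j k) (α k))
    (ν : ℕ)
    (hν : ν = ((Finset.range K).filter
      (fun k => (i k < n₁ ∧ ¬ j k < n₁) ∨ (¬ i k < n₁ ∧ j k < n₁))).card) :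
    (∑ l ∈ Finset.range n₁, x K l) / n₁ ≥ 1 - 2 * ν / n₁ := by
  have hn₁ : (0 : ℝ) < n₁ := by exact_mod_cast h1
  have hx0_mem : ∀ l < n₁ + n₂, x 0 l ∈ Set.Icc (-1 : ℝ) 1 := by
    have hratio : (n₁ : ℝ) / n₂ ≤ 1 := div_le_one_of_le₀ (by exact_mod_cast h12) (by positivity)
    intro l hl
    rw [hx0 l hl]
    split_ifs
    · norm_num
    · exact ⟨by linarith, by linarith [show (0 : ℝ) ≤ n₁ / n₂ by positivity]⟩
  have hsum0 : ∑ l ∈ range n₁, x 0 l = n₁ := by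
    rw [sum_congr rfl fun l hl => by rw [hx0 l ((mem_range.1 hl).trans_le (Nat.le_add_right _ _)), if_pos (mem_range.1 hl)]]
    simp
  have key := IsConvexUpdateSeq.sum_sub_card_le hstep hx0_mem (range n₁)
  simp only [mem_range, hsum0, sub_neg_eq_add] at key
  rw [ge_iff_le, le_div_iff₀ hn₁, hν, sub_mul, div_mul_cancel₀ _ hn₁.ne']
  linarith
end

section
/- Let n = n₁ + n₂ with 1 ≤ n₁ ≤ n₂, and let x ∈ ℝ^n with Σ_{i=1}^n x_i = 0. Let μ₁ = (Σ_{i=1}^{n₁} x_i)/n₁, μ₂ = (Σ_{i=n₁+1}^{n} x_i)/n₂, and σ = sqrt( ( Σ_{i=1}^{n₁} (x_i - μ₁)² + Σ_{i=n₁+1}^{n} (x_i - μ₂)² )/n ). Let y ∈ ℝ^n be obtained from x by the non-convex cut update: y_{n₁} = x_{n₁} + n₁·(x_{n₁+1} - x_{n₁}), y_{n₁+1} = x_{n₁+1} - n₁·(x_{n₁+1} - x_{n₁}), and y_i = x_i for all other i. Then the new group-1 mean μ₁' = (Σ_{i=1}^{n₁} y_i)/n₁ satisfies the identity μ₁' =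 μ₂ + (x_{n₁+1} - μ₂) - (x_{n₁} - μ₁), and consequently |μ₁' - μ₂| ≤ 2·√n·σ. -/
open scoped BigOperators

/-! The update adds `n₁ (x_{n₁} - x_{n₁-1})` to the group-1 sum, so the group-1 mean moves by exactly
`x_{n₁} - x_{n₁-1}`. Each of the deviations `x_{n₁} - μ₂` and `x_{n₁-1} - μ₁` is a single term of the
within-group sum of squares `n σ²`, hence at most `√n σ` in absolute value. -/

open Finset

/-- Indices start at `0`: the cut after the first `k` coordinates is the edge `(k - 1, k)`.
The non-convex cut update is `cutUpdate x n₁ n₁`. -/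
def cutUpdate (x : ℕ → ℝ) (k : ℕ) (t : ℝ) : ℕ → ℝ := fun l =>
  if l = k - 1 then x (k - 1) + t * (x k - x (k - 1))
  else if l = k then x k - t * (x k - x (k - 1))
  else x l

theorem sum_range_cutUpdate (x : ℕ → ℝ) {k : ℕ} (hk : 0 < k) (t : ℝ) :
    ∑ l ∈ range k, cutUpdate x k t l = ∑ l ∈ range k, x l + t * (x k - x (k - 1)) := by
  obtain ⟨m, rfl⟩ : ∃ m, k = m + 1 := ⟨k - 1, by omega⟩
  have hlow : ∀ l ∈ range m, cutUpdate x (m + 1) t l = x l := fun l hl => by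
    have := mem_range.mp hl
    simp only [cutUpdate, if_neg (by omega : l ≠ m + 1 - 1), if_neg (by omega : l ≠ m + 1)]
  rw [sum_range_succ, sum_range_succ, sum_congr rfl hlow]
  simp only [cutUpdate, Nat.add_sub_cancel, ite_true]
  ring

theorem mean_cutUpdate (x : ℕ → ℝ) {k : ℕ} (hk : 0 < k) :
    (∑ l ∈ range k, cutUpdate x k k l) / k = (∑ l ∈ range k, x l) / k + (x k - x (k - 1)) := by
  have : (k : ℝ) ≠ 0 := by positivity
  rw [sum_range_cutUpdate x hk]
  field_simp

theorem abs_le_sqrt_sum_sq {ι : Type*} {s : Finset ι} (g : ι → ℝ) {i : ι} (hi : i ∈ s) :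
    |g i| ≤ √(∑ j ∈ s, g j ^ 2) :=
  Real.abs_le_sqrt (single_le_sum (f := fun j => g j ^ 2) (fun _ _ => sq_nonneg _) hi)

theorem sqrt_mul_sqrt_div_cancel {a : ℝ} (ha : 0 < a) (b : ℝ) : √a * √(b / a) = √b := by
  rw [← Real.sqrt_mul ha.le, mul_div_cancel₀ b ha.ne']

theorem nonconvex_cut_update_group_mean_general
    (n₁ n₂ : ℕ) (h1 : 1 ≤ n₁) (h12 : n₁ ≤ n₂)
    (x : ℕ → ℝ)
    (μ₁ μ₂ σ : ℝ)
    (hμ₁ : μ₁ = (∑ l ∈ Finset.range n₁, x l) / n₁)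
    (hσ : σ = Real.sqrt (((∑ l ∈ Finset.range n₁, (x l - μ₁) ^ 2) +
        ∑ l ∈ Finset.Ico n₁ (n₁ + n₂), (x l - μ₂) ^ 2) / (n₁ + n₂)))
    (y : ℕ → ℝ)
    (hy : y = fun l =>
      if l = n₁ - 1 then x (n₁ - 1) + n₁ * (x n₁ - x (n₁ - 1))
      else if l = n₁ then x n₁ - n₁ * (x n₁ - x (n₁ - 1))
      else x l)
    (μ₁' : ℝ) (hμ₁' : μ₁' = (∑ l ∈ Finset.range n₁, y l) / n₁) :
    μ₁' = μ₂ + (x n₁ - μ₂) - (x (n₁ - 1) - μ₁) ∧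
    |μ₁' - μ₂| ≤ 2 * Real.sqrt (n₁ + n₂) * σ := by
  have hshift : μ₁' - μ₂ = (x n₁ - μ₂) - (x (n₁ - 1) - μ₁) := by
    have hcut : y = cutUpdate x n₁ n₁ := hy
    rw [hμ₁', hcut, hμ₁, mean_cutUpdate x h1]
    ring
  refine ⟨by linarith, ?_⟩
  set S₁ := ∑ l ∈ range n₁, (x l - μ₁) ^ 2
  set S₂ := ∑ l ∈ Ico n₁ (n₁ + n₂), (x l - μ₂) ^ 2
  have hS₁ : 0 ≤ S₁ := sum_nonneg fun _ _ => sq_nonneg _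
  have hS₂ : 0 ≤ S₂ := sum_nonneg fun _ _ => sq_nonneg _
  have hlast : |x (n₁ - 1) - μ₁| ≤ √(S₁ + S₂) :=
    (abs_le_sqrt_sum_sq (s := range n₁) (fun l => x l - μ₁) (mem_range.mpr (by omega))).trans
      (Real.sqrt_le_sqrt (by linarith))
  have hfirst : |x n₁ - μ₂| ≤ √(S₁ + S₂) :=
    (abs_le_sqrt_sum_sq (s := Ico n₁ (n₁ + n₂)) (fun l => x l - μ₂)
      (mem_Ico.mpr ⟨le_rfl, by omega⟩)).trans
      (Real.sqrt_le_sqrt (by linarith))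
  calc |μ₁' - μ₂| ≤ |x n₁ - μ₂| + |x (n₁ - 1) - μ₁| := hshift ▸ abs_sub _ _
    _ ≤ 2 * √(S₁ + S₂) := by linarith
    _ = 2 * √(n₁ + n₂) * σ := by
      rw [hσ, mul_assoc, sqrt_mul_sqrt_div_cancel (by positivity)]

/-- Zero-sum vector `x ∈ ℝⁿ`, `n = n₁ + n₂`, partitioned into the first
`n₁` coordinates (group 1, mean `μ₁`) and the last `n₂` coordinates (group 2, mean `μ₂`),
with within-group standard deviation `σ`.  Coordinates are indexed by `0, …, n-1`, so the
cut edge joins the last coordinate `n₁ - 1` of group 1 and the first coordinate `n₁` of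
group 2.  The non-convex cut update moves `n₁` times their difference across the cut.  The
new group-1 mean `μ₁'` satisfies `μ₁' = μ₂ + (x_{n₁} - μ₂) - (x_{n₁-1} - μ₁)`, hence
`|μ₁' - μ₂| ≤ 2 √n · σ`. -/
theorem nonconvex_cut_update_group_mean
    (n₁ n₂ : ℕ) (h1 : 1 ≤ n₁) (h12 : n₁ ≤ n₂)
    (x : ℕ → ℝ) (hsum : ∑ l ∈ Finset.range (n₁ + n₂), x l = 0)
    (μ₁ μ₂ σ : ℝ)
    (hμ₁ : μ₁ = (∑ l ∈ Finset.range n₁, x l) / n₁)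
    (hμ₂ : μ₂ = (∑ l ∈ Finset.Ico n₁ (n₁ + n₂), x l) / n₂)
    (hσ : σ = Real.sqrt (((∑ l ∈ Finset.range n₁, (x l - μ₁) ^ 2) +
        ∑ l ∈ Finset.Ico n₁ (n₁ + n₂), (x l - μ₂) ^ 2) / (n₁ + n₂)))
    (y : ℕ → ℝ)
    (hy : y = fun l =>
      if l = n₁ - 1 then x (n₁ - 1) + n₁ * (x n₁ - x (n₁ - 1))
      else if l = n₁ then x n₁ - n₁ * (x n₁ - x (n₁ - 1))
      else x l)
    (μ₁' : ℝ) (hμ₁' : μ₁' = (∑ l ∈ Finset.range n₁, y l) / n₁) :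
    μ₁' = μ₂ + (x n₁ - μ₂) - (x (n₁ - 1) - μ₁) ∧
    |μ₁' - μ₂| ≤ 2 * Real.sqrt (n₁ + n₂) * σ :=
  nonconvex_cut_update_group_mean_general n₁ n₂ h1 h12 x μ₁ μ₂ σ hμ₁ hσ y hy μ₁' hμ₁'
end
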